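/- arXiv:2107.00399 — 2 statements merged into one kernel-verified Lean document; each statement's English description precedes it below -/
import Mathlib

section
/- The MN array P', defined on rows indexed by t-subsets T of [K] and columns by k ∈ [K] via p'_{T,k} = φ(T ∪ {k}) if k ∉ T and p'_{T,k} = * otherwise, where φ is a bijection from (t+1)-subsets of [K] to [C(K,t+1)], is a (t+1)-regular (K, C(K,t), C(K−1,t−1), C(K,t+1)) PDA. -/
/-!
Row `T` and column `k` hold a symbol exactly when `k ∉ T`, and that symbol names `insert k T`.
A `(t+1)`-set `A` therefore appears once for each of its elements `k`, in row `A.erase k`; and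
two distinct occurrences `insert k₁ T₁ = insert k₂ T₂` force `k₁ ≠ k₂`, `k₂ ∈ T₁` and `k₁ ∈ T₂`,
which are the stars required at the opposite corners.
-/

open Finset

namespace Finset

variable {α : Type*} [DecidableEq α]

lemma mem_of_insert_eq_insert {a b : α} {s t : Finset α} (h : insert a s = insert b t)
    (hab : a ≠ b) : b ∈ s :=
  (mem_insert.1 (h ▸ mem_insert_self b t)).resolve_left hab.symm

lemma card_filter_mem_subtype_card_eq [Fintype α] (a : α) {t : ℕ} (ht : 1 ≤ t) :
    #{T : {T : Finset α // #T = t} | a ∈ T.val} = (Fintype.card α - 1).choose (t - 1) := by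
  rw [← card_univ, ← card_erase_of_mem (mem_univ a), ← card_powersetCard]
  refine card_bij (fun T _ ↦ T.val.erase a) ?_ ?_ ?_
  · intro T hT
    simp only [mem_filter_univ] at hT
    simp [mem_powersetCard, erase_subset_erase, card_erase_of_mem hT, T.2]
  · intro T₁ h₁ T₂ h₂ h
    simp only [mem_filter_univ] at h₁ h₂
    exact Subtype.ext (insert_erase_invOn.1.injOn h₁ h₂ h)
  · intro S hS
    obtain ⟨hSsub, hScard⟩ := mem_powersetCard.1 hS
    have ha : a ∉ S := fun h ↦ (mem_erase.1 (hSsub h)).1 rfl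
    refine ⟨⟨insert a S, by rw [card_insert_of_notMem ha, hScard]; omega⟩, ?_, erase_insert ha⟩
    simp

lemma card_filter_insert_eq [Fintype α] {t : ℕ} {A : Finset α} (hA : #A = t + 1) :
    #{Tk : {T : Finset α // #T = t} × α | Tk.2 ∉ Tk.1.val ∧ insert Tk.2 Tk.1.val = A} = t + 1 := by
  rw [← hA]
  refine card_bij (fun Tk _ ↦ Tk.2) ?_ ?_ ?_
  · rintro ⟨T, k⟩ h
    simp only [mem_filter_univ] at h
    exact h.2 ▸ mem_insert_self k T
  · rintro ⟨T₁, k⟩ h₁ ⟨T₂, k'⟩ h₂ (rfl : k = k')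
    simp only [mem_filter_univ] at h₁ h₂
    rw [Subtype.ext (insert_erase_invOn.2.injOn h₁.1 h₂.1 (h₁.2.trans h₂.2.symm))]
  · intro k hk
    refine ⟨(⟨A.erase k, by rw [card_erase_of_mem hk, hA]; rfl⟩, k), ?_, rfl⟩
    simp [insert_erase hk]

end Finset

/-- The MN array `P'` with rows indexed by `t`-subsets `T` of `[K]` and
columns by `k ∈ [K]`, defined by `p'_{T,k} = φ(T ∪ {k})` if `k ∉ T` and
`p'_{T,k} = *` otherwise (where `φ` is a bijection from the `(t+1)`-subsets
of `[K]` onto `[C(K,t+1)]`), is a `(t+1)`-regular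
`(K, C(K,t), C(K−1,t−1), C(K,t+1))` PDA:  it has `C(K,t)` rows, `C(K-1,t-1)`
stars per column, each integer appears exactly `t+1` times, and equal
integer entries lie in distinct rows and columns with stars at the opposite
corners of the `2×2` subarray they span. -/
theorem MN_array_is_regular_PDA (K t : ℕ) (ht : 1 ≤ t)
    (φ : {A : Finset (Fin K) // A.card = t + 1} ≃ Fin (K.choose (t + 1)))
    (P : {T : Finset (Fin K) // T.card = t} → Fin K → Option (Fin (K.choose (t + 1))))
    (hP : ∀ (T : {T : Finset (Fin K) // T.card = t}) (k : Fin K),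
      P T k = if h : k ∈ T.val then none
        else some (φ ⟨insert k T.val, by
          rw [Finset.card_insert_of_notMem h, T.2]⟩)) :
    -- there are C(K,t) rows
    Fintype.card {T : Finset (Fin K) // T.card = t} = K.choose t ∧
    -- C1: each column contains exactly C(K−1,t−1) stars
    (∀ k : Fin K,
      (Finset.univ.filter fun T : {T : Finset (Fin K) // T.card = t} =>
        P T k = none).card = (K - 1).choose (t - 1)) ∧
    -- C2': each integer appears exactly t+1 times
    (∀ s : Fin (K.choose (t + 1)),
      (Finset.univ.filter
        fun Tk : {T : Finset (Fin K) // T.card = t} × Fin K =>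
          P Tk.1 Tk.2 = some s).card = t + 1) ∧
    -- C3
    (∀ T₁ k₁ T₂ k₂ (s : Fin (K.choose (t + 1))),
      P T₁ k₁ = some s → P T₂ k₂ = some s → (T₁, k₁) ≠ (T₂, k₂) →
      T₁ ≠ T₂ ∧ k₁ ≠ k₂ ∧ P T₁ k₂ = none ∧ P T₂ k₁ = none) := by
  have hnone : ∀ T k, P T k = none ↔ k ∈ T.val := fun T k ↦ by
    rw [hP]; split_ifs with h <;> simp [h]
  have hsome : ∀ T k s, P T k = some s ↔ k ∉ T.val ∧ insert k T.val = (φ.symm s).val :=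
    fun T k s ↦ by
      rw [hP]; split_ifs with h <;> simp [h, ← Equiv.eq_symm_apply, ← Subtype.val_inj]
  refine ⟨by simp [Fintype.card_finset_len], fun k ↦ ?_, fun s ↦ ?_, ?_⟩
  · simpa only [hnone, Fintype.card_fin] using card_filter_mem_subtype_card_eq k ht
  · simpa only [hsome] using card_filter_insert_eq (φ.symm s).2
  · intro T₁ k₁ T₂ k₂ s h₁ h₂ hne
    obtain ⟨hk₁, he₁⟩ := (hsome _ _ _).1 h₁
    obtain ⟨hk₂, he₂⟩ := (hsome _ _ _).1 h₂
    have he : insert k₁ T₁.val = insert k₂ T₂.val := he₁.trans he₂.symm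
    have hk : k₁ ≠ k₂ := by
      rintro rfl
      exact hne (by rw [Subtype.ext (insert_erase_invOn.2.injOn hk₁ hk₂ he)])
    have hk₂T₁ : k₂ ∈ T₁.val := mem_of_insert_eq_insert he hk
    have hk₁T₂ : k₁ ∈ T₂.val := mem_of_insert_eq_insert he.symm hk.symm
    exact ⟨fun hT ↦ hk₂ (hT ▸ hk₂T₁), hk, (hnone _ _).2 hk₂T₁, (hnone _ _).2 hk₁T₂⟩
end

section
/- Let G be an F×F Cauchy matrix over a finite field F, 0 < Z < F, and define shares S = G·[W; V] where W ∈ F^{F−Z} is the secret and V ∈ F^{Z} is uniform and independent of W. Then for any subset I ⊆ [F] with |I| = Z, the shares (S_i)_{i∈I} are independent of W (i.e., any Z shares reveal no information about the secret). -/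
/-!
The `Z` selected shares are `S_I = B w + A v`, where `A` is the `Z × Z` block of `G` on the rows
`I` and the last `Z` columns. `A` is again a Cauchy matrix, hence nonsingular: a vector in its
kernel gives, via Lagrange interpolation at the nodes `y`, a polynomial of degree `< Z` vanishing
at the `Z` distinct points `x ∘ I`. So for each fixed secret `w`, `v ↦ S_I` is a bijection of
`𝔽^Z`, and it carries the uniform key to the uniform distribution, whatever `w` is.
-/

open Function Polynomial Lagrange Finset Matrix

theorem Matrix.mulVec_injective_of_cauchy {K m n : Type*} [Field K] [Fintype m] [Fintype n]
    {a : m → K} {b : n → K} (ha : Injective a) (hb : Injective b)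
    (hab : ∀ i j, a i ≠ b j) (hcard : Fintype.card n ≤ Fintype.card m) :
    Injective (Matrix.of fun i j => (a i - b j)⁻¹).mulVec := by
  refine (injective_iff_map_eq_zero (Matrix.of fun i j => (a i - b j)⁻¹).mulVecLin).2
    fun v hv => ?_
  classical
  -- With `w` the nodal weights of `b`, the interpolant of the values `v j / w j` at the nodes
  -- `b j` evaluates at `a i` to `nodal (a i)` times the `i`-th entry of the product.
  set r : n → K := fun j => v j / nodalWeight univ b j
  have heval : ∀ i, eval (a i) (interpolate univ b r) = 0 := fun i => by
    have hrow : ∑ j, (a i - b j)⁻¹ * v j = 0 := congrFun hv i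
    have hterm : ∀ j, nodalWeight univ b j * (a i - b j)⁻¹ * r j = (a i - b j)⁻¹ * v j :=
      fun j => by
        have := nodalWeight_ne_zero hb.injOn (mem_univ j)
        simp only [r]
        field_simp
    rw [eval_interpolate_not_at_node r fun j _ => hab i j, sum_congr rfl fun j _ => hterm j,
      hrow, mul_zero]
  have hzero : interpolate univ b r = 0 :=
    eq_zero_of_degree_lt_of_eval_index_eq_zero univ ha.injOn
      ((degree_interpolate_lt r hb.injOn).trans_le (by simpa using hcard)) fun i _ => heval i
  funext j
  have hj := eval_interpolate_at_node r hb.injOn (mem_univ j)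
  rw [hzero, eval_zero, eq_comm, div_eq_zero_iff] at hj
  exact hj.resolve_right (nodalWeight_ne_zero hb.injOn (mem_univ j))

theorem Fin.append_cast_apply {α : Type*} {k l n : ℕ} (h : k + l = n) (u : Fin k → α)
    (v : Fin l → α) (j : Fin n) :
    Fin.append u v (Fin.cast h.symm j) =
      if hj : j.val < k then u ⟨j, hj⟩ else v ⟨j - k, by omega⟩ := by
  obtain ⟨j, rfl⟩ := (finCongr h).surjective j
  induction j using Fin.addCases with
  | left j => simp
  | right j => simp [Fin.append_right]

theorem Matrix.mulVec_append {R m : Type*} [NonUnitalNonAssocSemiring R] [Fintype m] {k l : ℕ}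
    (M : Matrix m (Fin (k + l)) R) (u : Fin k → R) (v : Fin l → R) :
    M *ᵥ Fin.append u v =
      M.submatrix id (Fin.castAdd l) *ᵥ u + M.submatrix id (Fin.natAdd k) *ᵥ v := by
  ext i
  simp [mulVec, dotProduct, Fin.sum_univ_add]

theorem PMF.map_apply_of_injective {α β : Type*} {f : α → β} (hf : Injective f) (p : PMF α)
    (a : α) : p.map f (f a) = p a := by
  rw [map_apply, tsum_eq_single a fun a' h => if_neg fun e => h (hf e).symm, if_pos rfl]

theorem PMF.map_uniformOfFintype_of_bijective {α β : Type*} [Fintype α] [Nonempty α]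
    [Fintype β] [Nonempty β] {f : α → β} (hf : Bijective f) :
    (uniformOfFintype α).map f = uniformOfFintype β := by
  ext b
  obtain ⟨a, rfl⟩ := hf.2 b
  rw [map_apply_of_injective hf.1, uniformOfFintype_apply, uniformOfFintype_apply,
    Fintype.card_of_bijective hf]

theorem PMF.bind_map_prodMk_apply {α β : Type*} (μ : PMF α) (ν : α → PMF β) (a : α) (b : β) :
    (μ.bind fun a' => (ν a').map (Prod.mk a')) (a, b) = μ a * ν a b := by
  rw [bind_apply, tsum_eq_single a, map_apply_of_injective (Prod.mk_right_injective a)]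
  intro a' ha'
  rw [(apply_eq_zero_iff ((ν a').map (Prod.mk a')) (a, b)).2 (by simp [ha']), mul_zero]

theorem PMF.map_bind_uniformOfFintype_of_bijective {α β γ : Type*} [Fintype β] [Nonempty β]
    [Fintype γ] [Nonempty γ] (μ : PMF α) {f : α → β → γ} (hf : ∀ a, Bijective (f a)) :
    (μ.bind fun a => (uniformOfFintype β).map (Prod.mk a)).map (fun p => (p.1, f p.1 p.2)) =
      μ.bind fun a => (uniformOfFintype γ).map (Prod.mk a) := by
  rw [map_bind]
  congr 1
  funext a
  rw [map_comp, ← map_uniformOfFintype_of_bijective (hf a), map_comp]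
  rfl

/-- Secrecy of the `(Z,F)` non-perfect secret sharing scheme: let `G` be an
`F × F` Cauchy matrix over a finite field `𝔽`, let the secret `W` have an
arbitrary distribution `μW` on `𝔽^{F−Z}`, and let the key `V` be uniform on
`𝔽^Z` and independent of `W`; the shares are `S = G·[W;V]`.  Then for any
subset of `Z` share indices (given by an injection `I : Fin Z → Fin F`), the
selected shares are uniformly distributed and independent of `W`: the joint
distribution of `(W, (S_i)_{i ∈ I})` is the product of `μW` with the uniform
distribution on `𝔽^Z`. -/
theorem secret_sharing_Z_shares_independent
    (𝔽 : Type*) [Field 𝔽] [Fintype 𝔽]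
    (F Z : ℕ)
    (x y : Fin F → 𝔽)
    (hx : Function.Injective x) (hy : Function.Injective y)
    (hxy : ∀ i j, x i ≠ y j)
    (G : Matrix (Fin F) (Fin F) 𝔽)
    (hG : ∀ i j, G i j = (x i - y j)⁻¹)
    (concat : (Fin (F - Z) → 𝔽) → (Fin Z → 𝔽) → Fin F → 𝔽)
    (hconcat : ∀ w v (j : Fin F), concat w v j =
      if h : j.val < F - Z then w ⟨j.val, h⟩ else v ⟨j.val - (F - Z), by omega⟩)
    (I : Fin Z → Fin F) (hI : Function.Injective I)
    (μW : PMF (Fin (F - Z) → 𝔽)) :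
    ∀ (w : Fin (F - Z) → 𝔽) (s : Fin Z → 𝔽),
      ((μW.bind fun w' => (PMF.uniformOfFintype (Fin Z → 𝔽)).map
          fun v => (w', v)).map
        fun p => (p.1, fun i : Fin Z => G.mulVec (concat p.1 p.2) (I i))) (w, s)
      = μW w * PMF.uniformOfFintype (Fin Z → 𝔽) s := by
  intro w s
  have hF : F - Z + Z = F :=
    Nat.sub_add_cancel (by simpa using Fintype.card_le_of_injective I hI)
  set e : Fin (F - Z + Z) ≃ Fin F := finCongr hF
  have hconcat_eq : ∀ w' v, concat w' v = Fin.append w' v ∘ e.symm := fun w' v => by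
    funext j
    rw [hconcat, Function.comp_apply, finCongr_symm, finCongr_apply, Fin.append_cast_apply hF]
  set A := G.submatrix I (e ∘ Fin.natAdd (F - Z))
  have hA : A = Matrix.of fun i k => (x (I i) - y (e (Fin.natAdd _ k)))⁻¹ := by
    ext
    simp [A, hG]
  have hshares : ∀ w' v, (G *ᵥ concat w' v) ∘ I =
      G.submatrix I (e ∘ Fin.castAdd Z) *ᵥ w' + A *ᵥ v := fun w' v => by
    rw [hconcat_eq, ← submatrix_mulVec_equiv, mulVec_append, submatrix_submatrix,
      submatrix_submatrix]
    rfl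
  have hAinj : Injective A.mulVec := hA ▸ mulVec_injective_of_cauchy (hx.comp hI)
    (hy.comp (e.injective.comp (Fin.natAdd_injective _ _))) (fun i j => hxy _ _) le_rfl
  have hbij : ∀ w', Bijective fun v => (G *ᵥ concat w' v) ∘ I := fun w' => by
    rw [funext (hshares w')]
    exact Finite.injective_iff_bijective.1 ((add_right_injective _).comp hAinj)
  rw [PMF.map_bind_uniformOfFintype_of_bijective μW
    (f := fun w' v i => (G *ᵥ concat w' v) (I i)) hbij, PMF.bind_map_prodMk_apply]
end
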